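/- In a real normed space with linearly independent vectors x, y, the function h₊(t) := ‖x/‖x‖ + (y+t·x)/‖y+t·x‖‖ tends to 0 as t → −∞ and to 2 as t → +∞, and h₋(t) := ‖x/‖x‖ − (y+t·x)/‖y+t·x‖‖ tends to 2 as t → −∞ and to 0 as t → +∞. -/

import Mathlib

/-!
Write `normalize v = ‖v‖⁻¹ • v`. For `t > 0` the vector `y + t • x` is a positive multiple of
`x + t⁻¹ • y → x`, so by continuity of `normalize` away from `0` its direction tends to
`normalize x` as `t → +∞`; replacing `x` by `-x` shows that it tends to `-normalize x` as
`t → -∞`. The four limits are then `‖u - u‖ = 0` and `‖u + u‖ = 2` for the unit vector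
`u = normalize x`.
-/

open Filter Topology NormedSpace

section

variable {V : Type*} [NormedAddCommGroup V] [NormedSpace ℝ V]

theorem NormedSpace.continuousAt_normalize {x : V} (hx : x ≠ 0) : ContinuousAt normalize x :=
  (continuous_norm.continuousAt.inv₀ (norm_ne_zero_iff.2 hx)).smul continuousAt_id

theorem tendsto_normalize_add_smul_atTop {x : V} (hx : x ≠ 0) (y : V) :
    Tendsto (fun t : ℝ => normalize (y + t • x)) atTop (𝓝 (normalize x)) := by
  have hdir : Tendsto (fun t : ℝ => x + t⁻¹ • y) atTop (𝓝 x) := by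
    simpa using tendsto_const_nhds.add ((tendsto_inv_atTop_zero (𝕜 := ℝ)).smul_const y)
  refine ((continuousAt_normalize hx).tendsto.comp hdir).congr' ?_
  filter_upwards [eventually_gt_atTop 0] with t ht
  rw [Function.comp_apply, ← normalize_smul_of_pos ht, smul_add, smul_inv_smul₀ ht.ne', add_comm]

theorem tendsto_normalize_add_smul_atBot {x : V} (hx : x ≠ 0) (y : V) :
    Tendsto (fun t : ℝ => normalize (y + t • x)) atBot (𝓝 (-normalize x)) := by
  have := (tendsto_normalize_add_smul_atTop (neg_ne_zero.2 hx) y).comp tendsto_neg_atBot_atTop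
  simpa [Function.comp_def] using this

theorem NormedSpace.norm_normalize_add_self {x : V} (hx : x ≠ 0) :
    ‖normalize x + normalize x‖ = 2 := by
  rw [← two_smul ℝ, norm_smul, norm_normalize hx]
  norm_num

end

theorem stmt_10 {X : Type*} [NormedAddCommGroup X] [NormedSpace ℝ X]
    (x y : X) (h : LinearIndependent ℝ ![x, y]) :
    Filter.Tendsto (fun t : ℝ => ‖(‖x‖)⁻¹ • x + (‖y + t • x‖)⁻¹ • (y + t • x)‖)
        Filter.atBot (nhds 0) ∧
    Filter.Tendsto (fun t : ℝ => ‖(‖x‖)⁻¹ • x + (‖y + t • x‖)⁻¹ • (y + t • x)‖)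
        Filter.atTop (nhds 2) ∧
    Filter.Tendsto (fun t : ℝ => ‖(‖x‖)⁻¹ • x - (‖y + t • x‖)⁻¹ • (y + t • x)‖)
        Filter.atBot (nhds 2) ∧
    Filter.Tendsto (fun t : ℝ => ‖(‖x‖)⁻¹ • x - (‖y + t • x‖)⁻¹ • (y + t • x)‖)
        Filter.atTop (nhds 0) := by
  have hx : x ≠ 0 := by simpa using h.ne_zero 0
  have htop := tendsto_normalize_add_smul_atTop hx y
  have hbot := tendsto_normalize_add_smul_atBot hx y
  have h2 := norm_normalize_add_self hx
  refine ⟨?_, ?_, ?_, ?_⟩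
  · have := (hbot.const_add (normalize x)).norm
    rwa [add_neg_cancel, norm_zero] at this
  · have := (htop.const_add (normalize x)).norm
    rwa [h2] at this
  · have := (hbot.const_sub (normalize x)).norm
    rwa [sub_neg_eq_add, h2] at this
  · have := (htop.const_sub (normalize x)).norm
    rwa [sub_self, norm_zero] at this
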